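/- arXiv:2209.13200 — 11 statements merged into one kernel-verified Lean document; each statement's English description precedes it below -/
import Mathlib

section
/- If T : X → X is an (a,b,α)-enriched interpolative Kannan type operator on a normed space X with b > 0, then setting λ = 1/(b+1), the averaged operator T_λ = (1-λ)I + λT satisfies ‖T_λ x − T_λ y‖ ≤ a · ‖x − T_λ x‖^α · ‖y − T_λ y‖^(1−α) for all x, y ∈ X. -/
section Averaged

variable {E : Type*} [AddCommGroup E] [Module ℝ E]

theorem sub_averaged_eq_smul (T : E → E) (l : ℝ) (x : E) :
    x - ((1 - l) • x + l • T x) = l • (x - T x) := by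
  module

theorem averaged_sub_averaged_eq_smul (T : E → E) {b : ℝ} (hb : b + 1 ≠ 0) (x y : E) :
    ((1 - 1 / (b + 1)) • x + (1 / (b + 1)) • T x) -
        ((1 - 1 / (b + 1)) • y + (1 / (b + 1)) • T y) =
      (1 / (b + 1)) • (b • (x - y) + (T x - T y)) := by
  have hcoeff : 1 - 1 / (b + 1) = 1 / (b + 1) * b := by
    field_simp
    ring
  rw [hcoeff]
  module

end Averaged

theorem mul_mul_rpow_mul_rpow_one_sub {c : ℝ} (hc : 0 < c) (a α : ℝ) {u v : ℝ}
    (hu : 0 ≤ u) (hv : 0 ≤ v) :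
    a * (c * u) ^ α * (c * v) ^ (1 - α) = c * (a * u ^ α * v ^ (1 - α)) := by
  have hsplit : c ^ α * c ^ (1 - α) = c := by
    rw [← Real.rpow_add hc, add_sub_cancel, Real.rpow_one]
  rw [Real.mul_rpow hc.le hu, Real.mul_rpow hc.le hv]
  linear_combination (a * u ^ α * v ^ (1 - α)) * hsplit

theorem enriched_interpolative_averaged_contraction_general
    {E : Type*} [NormedAddCommGroup E] [NormedSpace ℝ E]
    (T : E → E) (a b α : ℝ) (hb : 0 < b)
    (hT : ∀ x y : E, ‖b • (x - y) + (T x - T y)‖ ≤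
      a * ‖x - T x‖ ^ α * ‖y - T y‖ ^ (1 - α)) :
    ∀ x y : E,
      ‖((1 - (1 / (b + 1))) • x + (1 / (b + 1)) • T x) -
        ((1 - (1 / (b + 1))) • y + (1 / (b + 1)) • T y)‖ ≤
      a * ‖x - ((1 - (1 / (b + 1))) • x + (1 / (b + 1)) • T x)‖ ^ α *
        ‖y - ((1 - (1 / (b + 1))) • y + (1 / (b + 1)) • T y)‖ ^ (1 - α) := by
  intro x y
  have hb1 : 0 < b + 1 := by linarith
  have hl : 0 < 1 / (b + 1) := by positivity
  rw [averaged_sub_averaged_eq_smul T hb1.ne' x y, sub_averaged_eq_smul, sub_averaged_eq_smul,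
    norm_smul, norm_smul, norm_smul, Real.norm_of_nonneg hl.le,
    mul_mul_rpow_mul_rpow_one_sub hl a α (norm_nonneg _) (norm_nonneg _)]
  exact mul_le_mul_of_nonneg_left (hT x y) hl.le

theorem enriched_interpolative_averaged_contraction
    {E : Type*} [NormedAddCommGroup E] [NormedSpace ℝ E]
    (T : E → E) (a b α : ℝ) (hb : 0 < b) (ha0 : 0 ≤ a) (ha1 : a < 1)
    (hα0 : 0 < α) (hα1 : α < 1)
    (hT : ∀ x y : E, ‖b • (x - y) + (T x - T y)‖ ≤
      a * ‖x - T x‖ ^ α * ‖y - T y‖ ^ (1 - α)) :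
    ∀ x y : E,
      ‖((1 - (1 / (b + 1))) • x + (1 / (b + 1)) • T x) -
        ((1 - (1 / (b + 1))) • y + (1 / (b + 1)) • T y)‖ ≤
      a * ‖x - ((1 - (1 / (b + 1))) • x + (1 / (b + 1)) • T x)‖ ^ α *
        ‖y - ((1 - (1 / (b + 1))) • y + (1 / (b + 1)) • T y)‖ ^ (1 - α) :=
  enriched_interpolative_averaged_contraction_general T a b α hb hT
end

section
/- Let T : X → X satisfy ‖Tx − Ty‖ ≤ a · ‖x − Tx‖^α · ‖y − Ty‖^(1−α) for all x, y ∈ X, where a ∈ [0,1) and α ∈ (0,1). Then the Picard iteration x_{n+1} = T x_n satisfies ‖x_{n+1} − x_n‖ ≤ a^n ‖x_1 − x_0‖ for all n ≥ 0. -/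
/-!
Applying the hypothesis to the consecutive iterates `x (n+1)` and `x n` gives
`d (n+1) ≤ a · d (n+1)^α · d n^(1-α)` for `d n = ‖x (n+1) - x n‖`. Cancelling `d (n+1)^α` leaves
`d (n+1)^(1-α) ≤ a · d n^(1-α) ≤ (a · d n)^(1-α)`, because `a ≤ a^(1-α)` for `a ∈ [0,1]`;
taking `(1-α)`-th roots gives `d (n+1) ≤ a · d n`, and the bound follows by induction.
-/

open Real

theorem le_mul_of_le_mul_rpow_mul_rpow {a α u v : ℝ} (ha0 : 0 ≤ a) (ha1 : a ≤ 1)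
    (hα0 : 0 ≤ α) (hα1 : α < 1) (hu : 0 ≤ u) (hv : 0 ≤ v)
    (h : u ≤ a * u ^ α * v ^ (1 - α)) : u ≤ a * v := by
  rcases hu.eq_or_lt with rfl | hu
  · positivity
  have hβ : 0 < 1 - α := by linarith
  have hcancel : u ^ (1 - α) ≤ a * v ^ (1 - α) := by
    refine le_of_mul_le_mul_left ?_ (rpow_pos_of_pos hu α)
    rwa [← rpow_add hu, add_sub_cancel, rpow_one, ← mul_assoc, mul_comm (u ^ α) a]
  have hroot : u ^ (1 - α) ≤ (a * v) ^ (1 - α) := by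
    rw [mul_rpow ha0 hv]
    exact hcancel.trans <| mul_le_mul_of_nonneg_right
      (self_le_rpow_of_le_one ha0 ha1 (by linarith)) (by positivity)
  exact (rpow_le_rpow_iff hu.le (by positivity) hβ).mp hroot

theorem le_pow_mul_of_le_mul_succ {d : ℕ → ℝ} {a : ℝ} (ha : 0 ≤ a)
    (h : ∀ n, d (n + 1) ≤ a * d n) (n : ℕ) : d n ≤ a ^ n * d 0 := by
  induction n with
  | zero => simp
  | succ n ih =>
    calc d (n + 1) ≤ a * d n := h n
      _ ≤ a * (a ^ n * d 0) := mul_le_mul_of_nonneg_left ih ha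
      _ = a ^ (n + 1) * d 0 := by ring

theorem norm_apply_apply_sub_apply_le {E : Type*} [SeminormedAddCommGroup E] {T : E → E}
    {a α : ℝ} (ha0 : 0 ≤ a) (ha1 : a ≤ 1) (hα0 : 0 ≤ α) (hα1 : α < 1)
    (hT : ∀ x y : E, ‖T x - T y‖ ≤ a * ‖x - T x‖ ^ α * ‖y - T y‖ ^ (1 - α)) (x : E) :
    ‖T (T x) - T x‖ ≤ a * ‖T x - x‖ := by
  refine le_mul_of_le_mul_rpow_mul_rpow ha0 ha1 hα0 hα1 (norm_nonneg _) (norm_nonneg _) ?_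
  exact (hT (T x) x).trans_eq <| by rw [norm_sub_rev (T x) (T (T x)), norm_sub_rev x (T x)]

theorem picard_iterates_geometric_bound_general
    {E : Type*} [NormedAddCommGroup E]
    (T : E → E) (a α : ℝ) (ha0 : 0 ≤ a) (ha1 : a < 1)
    (hα0 : 0 < α) (hα1 : α < 1)
    (hT : ∀ x y : E, ‖T x - T y‖ ≤ a * ‖x - T x‖ ^ α * ‖y - T y‖ ^ (1 - α))
    (x : ℕ → E) (hx : ∀ n, x (n + 1) = T (x n)) :
    ∀ n : ℕ, ‖x (n + 1) - x n‖ ≤ a ^ n * ‖x 1 - x 0‖ := by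
  refine le_pow_mul_of_le_mul_succ (d := fun n => ‖x (n + 1) - x n‖) ha0 fun n => ?_
  show ‖x (n + 2) - x (n + 1)‖ ≤ a * ‖x (n + 1) - x n‖
  rw [hx (n + 1), hx n]
  exact norm_apply_apply_sub_apply_le ha0 ha1.le hα0.le hα1 hT (x n)

theorem picard_iterates_geometric_bound
    {E : Type*} [NormedAddCommGroup E] [NormedSpace ℝ E]
    (T : E → E) (a α : ℝ) (ha0 : 0 ≤ a) (ha1 : a < 1)
    (hα0 : 0 < α) (hα1 : α < 1)
    (hT : ∀ x y : E, ‖T x - T y‖ ≤ a * ‖x - T x‖ ^ α * ‖y - T y‖ ^ (1 - α))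
    (x : ℕ → E) (hx : ∀ n, x (n + 1) = T (x n)) :
    ∀ n : ℕ, ‖x (n + 1) - x n‖ ≤ a ^ n * ‖x 1 - x 0‖ :=
  picard_iterates_geometric_bound_general T a α ha0 ha1 hα0 hα1 hT x hx
end

section
/- Let T : X → X satisfy ‖Tx − Ty‖ ≤ a · ‖x − Tx‖^α · ‖y − Ty‖^(1−α) for all x, y ∈ X, where a ∈ [0,1) and α ∈ (0,1). Then the Picard iteration sequence x_{n+1} = T x_n starting from any x_0 is a Cauchy sequence. -/
theorem picard_iterates_cauchy
    {E : Type*} [NormedAddCommGroup E] [NormedSpace ℝ E]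
    (T : E → E) (a α : ℝ) (ha0 : 0 ≤ a) (ha1 : a < 1)
    (hα0 : 0 < α) (hα1 : α < 1)
    (hT : ∀ x y : E, ‖T x - T y‖ ≤ a * ‖x - T x‖ ^ α * ‖y - T y‖ ^ (1 - α))
    (x₀ : E) :
    CauchySeq (fun n => T^[n] x₀) := by
  set r : ℝ := a ^ (1 / α) with hr_def
  have hr0 : 0 ≤ r := Real.rpow_nonneg ha0 _
  have hr1 : r < 1 := by
    rcases eq_or_lt_of_le ha0 with h | h
    · rw [hr_def, ← h, Real.zero_rpow (by positivity)]; norm_num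
    · exact Real.rpow_lt_one ha0 ha1 (by positivity)
  set d : ℕ → ℝ := fun n => ‖T^[n] x₀ - T^[n+1] x₀‖ with hd_def
  have hd0 : ∀ n, 0 ≤ d n := fun n => norm_nonneg _
  have key : ∀ n, d (n + 1) ≤ r * d n := by
    intro n
    have h1 : d (n + 1) ≤ a * (d n) ^ α * (d (n + 1)) ^ (1 - α) := by
      have := hT (T^[n] x₀) (T^[n+1] x₀)
      simpa [hd_def, Function.iterate_succ_apply'] using this
    rcases eq_or_lt_of_le (hd0 (n + 1)) with h0 | h0
    · rw [← h0]; positivity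
    · -- d(n+1)^α ≤ a * d n ^ α
      have h2 : (d (n + 1)) ^ α ≤ a * (d n) ^ α := by
        have hsplit : d (n + 1) = (d (n + 1)) ^ α * (d (n + 1)) ^ (1 - α) := by
          rw [← Real.rpow_add h0]; simp
        nth_rewrite 1 [hsplit] at h1
        have hpos : (0:ℝ) < (d (n + 1)) ^ (1 - α) := Real.rpow_pos_of_pos h0 _
        calc (d (n + 1)) ^ α
            = (d (n + 1)) ^ α * (d (n + 1)) ^ (1 - α) / (d (n + 1)) ^ (1 - α) := by
              field_simp
          _ ≤ a * (d n) ^ α * (d (n + 1)) ^ (1 - α) / (d (n + 1)) ^ (1 - α) := by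
              gcongr
          _ = a * (d n) ^ α := by field_simp
      have h3 : a * (d n) ^ α = (r * d n) ^ α := by
        rw [Real.mul_rpow hr0 (hd0 n), hr_def, ← Real.rpow_mul ha0, one_div,
          inv_mul_cancel₀ hα0.ne', Real.rpow_one]
      rw [h3] at h2
      exact (Real.rpow_le_rpow_iff (hd0 _) (by positivity) hα0).mp h2
  have bound : ∀ n, d n ≤ d 0 * r ^ n := by
    intro n
    induction n with
    | zero => simp
    | succ k ih =>
      calc d (k + 1) ≤ r * d k := key k
        _ ≤ r * (d 0 * r ^ k) := by gcongr
        _ = d 0 * r ^ (k + 1) := by ring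
  apply cauchySeq_of_le_geometric r (d 0) hr1
  intro n
  simpa [dist_eq_norm, hd_def] using bound n
end

section
/- Let X be a Banach space and T : X → X an (a,b,α)-enriched interpolative Kannan type operator. Then T has a unique fixed point. -/
/-!
Averaging with the Krasnoselskij map `K x = (1 - λ) x + λ T x`, `λ = 1 / (b + 1)`, turns the enriched
condition into the plain interpolative Kannan condition `d(Kx, Ky) ≤ a d(x, Kx)^α d(y, Ky)^(1-α)`
without changing the fixed points. For such a map the orbit steps contract by the factor `a`,
so every orbit is Cauchy; plugging the orbit into the condition against its limit `z` shows
`K z = z`, and the condition applied to two fixed points gives uniqueness.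
-/

open Filter Topology Function

lemma Real.rpow_mul_rpow_one_sub {p : ℝ} (hp : 0 ≤ p) (α : ℝ) : p ^ α * p ^ (1 - α) = p := by
  rw [← Real.rpow_add' hp (by simp), add_sub_cancel, Real.rpow_one]

def IsInterpolativeKannanMap {X : Type*} [MetricSpace X] (S : X → X) (a α : ℝ) : Prop :=
  ∀ x y, dist (S x) (S y) ≤ a * dist x (S x) ^ α * dist y (S y) ^ (1 - α)

namespace IsInterpolativeKannanMap

variable {X : Type*} [MetricSpace X] {S : X → X} {a α : ℝ}

theorem dist_map_map_le (hS : IsInterpolativeKannanMap S a α) (ha0 : 0 ≤ a) (ha1 : a < 1)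
    (hα0 : 0 ≤ α) (hα1 : α ≤ 1) (x : X) :
    dist (S x) (S (S x)) ≤ a * dist x (S x) := by
  set p := dist x (S x)
  set q := dist (S x) (S (S x))
  have hp : 0 ≤ p := dist_nonneg
  have hq : 0 ≤ q := dist_nonneg
  rcases le_total q p with hqp | hpq
  · calc q ≤ a * p ^ α * q ^ (1 - α) := hS x (S x)
      _ ≤ a * p ^ α * p ^ (1 - α) := by gcongr
      _ = a * p := by rw [mul_assoc, Real.rpow_mul_rpow_one_sub hp]
  · have hqa : q ≤ a * q :=
      calc q ≤ a * p ^ α * q ^ (1 - α) := hS x (S x)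
        _ ≤ a * q ^ α * q ^ (1 - α) := by gcongr
        _ = a * q := by rw [mul_assoc, Real.rpow_mul_rpow_one_sub hq]
    nlinarith [mul_nonneg ha0 hp]

theorem dist_iterate_succ_le (hS : IsInterpolativeKannanMap S a α) (ha0 : 0 ≤ a) (ha1 : a < 1)
    (hα0 : 0 ≤ α) (hα1 : α ≤ 1) (x : X) (n : ℕ) :
    dist (S^[n] x) (S^[n + 1] x) ≤ dist x (S x) * a ^ n := by
  induction n with
  | zero => simp
  | succ n ih =>
    calc dist (S^[n + 1] x) (S^[n + 1 + 1] x)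
        = dist (S (S^[n] x)) (S (S (S^[n] x))) := by simp only [iterate_succ_apply']
      _ ≤ a * dist (S^[n] x) (S (S^[n] x)) := hS.dist_map_map_le ha0 ha1 hα0 hα1 _
      _ = a * dist (S^[n] x) (S^[n + 1] x) := by rw [iterate_succ_apply']
      _ ≤ a * (dist x (S x) * a ^ n) := by gcongr
      _ = dist x (S x) * a ^ (n + 1) := by ring

theorem isFixedPt_of_tendsto_iterate (hS : IsInterpolativeKannanMap S a α) (hα0 : 0 < α)
    {x z : X} (hz : Tendsto (fun n ↦ S^[n] x) atTop (𝓝 z)) : IsFixedPt S z := by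
  have hz' : Tendsto (fun n ↦ S^[n + 1] x) atTop (𝓝 z) := hz.comp (tendsto_add_atTop_nat 1)
  have hstep : Tendsto (fun n ↦ dist (S^[n] x) (S^[n + 1] x)) atTop (𝓝 0) := by
    simpa using hz.dist hz'
  have hbound : Tendsto (fun n ↦ a * dist (S^[n] x) (S^[n + 1] x) ^ α * dist z (S z) ^ (1 - α))
      atTop (𝓝 0) := by
    simpa using ((hstep.rpow_const_nhds_zero hα0).const_mul a).mul_const (dist z (S z) ^ (1 - α))
  have hSz : Tendsto (fun n ↦ S^[n + 1] x) atTop (𝓝 (S z)) := by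
    refine tendsto_iff_dist_tendsto_zero.2 (squeeze_zero (fun _ ↦ dist_nonneg) (fun n ↦ ?_) hbound)
    rw [iterate_succ_apply']
    exact hS _ _
  exact tendsto_nhds_unique hSz hz'

theorem eq_of_isFixedPt (hS : IsInterpolativeKannanMap S a α) (hα0 : 0 < α) {y z : X}
    (hy : IsFixedPt S y) (hz : IsFixedPt S z) : y = z := by
  have h := hS y z
  rw [hy, hz, dist_self, Real.zero_rpow hα0.ne'] at h
  exact dist_le_zero.1 (by simpa using h)

theorem existsUnique_isFixedPt [CompleteSpace X] [Nonempty X] (hS : IsInterpolativeKannanMap S a α)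
    (ha0 : 0 ≤ a) (ha1 : a < 1) (hα0 : 0 < α) (hα1 : α ≤ 1) : ∃! z, IsFixedPt S z := by
  obtain ⟨x⟩ := ‹Nonempty X›
  have hcauchy : CauchySeq fun n ↦ S^[n] x :=
    cauchySeq_of_le_geometric a _ ha1 (hS.dist_iterate_succ_le ha0 ha1 hα0.le hα1 x)
  obtain ⟨z, hz⟩ := cauchySeq_tendsto_of_complete hcauchy
  exact ⟨z, hS.isFixedPt_of_tendsto_iterate hα0 hz, fun y hy ↦
    hS.eq_of_isFixedPt hα0 hy (hS.isFixedPt_of_tendsto_iterate hα0 hz)⟩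

end IsInterpolativeKannanMap

section Krasnoselskij

variable {E : Type*} [NormedAddCommGroup E] [NormedSpace ℝ E]

def IsEnrichedInterpolativeKannanMap (T : E → E) (a b α : ℝ) : Prop :=
  ∀ x y, ‖b • (x - y) + (T x - T y)‖ ≤ a * ‖x - T x‖ ^ α * ‖y - T y‖ ^ (1 - α)

def krasnoselskijMap (l : ℝ) (T : E → E) (x : E) : E := (1 - l) • x + l • T x

lemma sub_krasnoselskijMap (l : ℝ) (T : E → E) (x : E) :
    x - krasnoselskijMap l T x = l • (x - T x) := by
  unfold krasnoselskijMap
  module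

lemma krasnoselskijMap_sub_krasnoselskijMap {l : ℝ} (hl : l ≠ 0) (T : E → E) (x y : E) :
    krasnoselskijMap l T x - krasnoselskijMap l T y = l • ((l⁻¹ - 1) • (x - y) + (T x - T y)) := by
  unfold krasnoselskijMap
  rw [smul_add, smul_smul, mul_sub, mul_inv_cancel₀ hl]
  module

lemma isFixedPt_krasnoselskijMap_iff {l : ℝ} (hl : l ≠ 0) {T : E → E} {x : E} :
    IsFixedPt (krasnoselskijMap l T) x ↔ IsFixedPt T x := by
  rw [IsFixedPt, IsFixedPt, eq_comm, ← sub_eq_zero, sub_krasnoselskijMap, smul_eq_zero,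
    sub_eq_zero, eq_comm (a := x)]
  simp only [hl, false_or]

theorem IsEnrichedInterpolativeKannanMap.isInterpolativeKannanMap_krasnoselskijMap
    {T : E → E} {a b α : ℝ} (hT : IsEnrichedInterpolativeKannanMap T a b α) (hb : 0 ≤ b) :
    IsInterpolativeKannanMap (krasnoselskijMap (b + 1)⁻¹ T) a α := by
  set l : ℝ := (b + 1)⁻¹
  have hl : 0 < l := by positivity
  have hlb : l⁻¹ - 1 = b := by simp [l]
  intro x y
  rw [dist_eq_norm, dist_eq_norm, dist_eq_norm, krasnoselskijMap_sub_krasnoselskijMap hl.ne',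
    sub_krasnoselskijMap, sub_krasnoselskijMap, hlb, norm_smul, norm_smul, norm_smul,
    Real.norm_of_nonneg hl.le, Real.mul_rpow hl.le (norm_nonneg _),
    Real.mul_rpow hl.le (norm_nonneg _)]
  calc l * ‖b • (x - y) + (T x - T y)‖ ≤ l * (a * ‖x - T x‖ ^ α * ‖y - T y‖ ^ (1 - α)) := by
        gcongr
        exact hT x y
    _ = a * (l ^ α * ‖x - T x‖ ^ α) * (l ^ (1 - α) * ‖y - T y‖ ^ (1 - α)) := by
        linear_combination -(a * ‖x - T x‖ ^ α * ‖y - T y‖ ^ (1 - α)) *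
          Real.rpow_mul_rpow_one_sub hl.le α

end Krasnoselskij

theorem enriched_interpolative_kannan_fixed_point
    {E : Type*} [NormedAddCommGroup E] [NormedSpace ℝ E] [CompleteSpace E]
    (T : E → E) (a b α : ℝ) (hb : 0 ≤ b) (ha0 : 0 ≤ a) (ha1 : a < 1)
    (hα0 : 0 < α) (hα1 : α < 1)
    (hT : ∀ x y : E, ‖b • (x - y) + (T x - T y)‖ ≤
      a * ‖x - T x‖ ^ α * ‖y - T y‖ ^ (1 - α)) :
    ∃! xs : E, T xs = xs := by
  have hl : (b + 1)⁻¹ ≠ 0 := by positivity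
  have hK := IsEnrichedInterpolativeKannanMap.isInterpolativeKannanMap_krasnoselskijMap hT hb
  exact (existsUnique_congr fun _ ↦ isFixedPt_krasnoselskijMap_iff hl).1
    (hK.existsUnique_isFixedPt ha0 ha1 hα0 hα1.le)
end

section
/- Let X be a Banach space and T : X → X an (a,b,α)-enriched interpolative Kannan type operator with b > 0 and λ = 1/(b+1). Then for any x_0 ∈ X, the Krasnoselskii iteration x_{n+1} = (1−λ)x_n + λ T x_n converges strongly to the unique fixed point of T. -/
/-!
With `λ = 1/(b+1)` the averaged map `S x = (1-λ)x + λTx` satisfies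
`S x - S y = λ(b(x-y) + Tx - Ty)` and `x - S x = λ(x - Tx)`, so the enriched condition on `T`
turns into the plain interpolative Kannan condition
`d(Sx, Sy) ≤ a d(x, Sx)^α d(y, Sy)^(1-α)` for `S`, and `S`, `T` have the same fixed points.
Taking `y = Sx` there gives `d(Sx, S²x) ≤ a^(1/α) d(x, Sx)`, so Picard orbits of `S` are
Cauchy; the condition with `y` the limit shows that the limit is fixed, and with two fixed
points it shows that they coincide.
-/

open Filter Topology

theorem le_rpow_inv_mul_of_le_mul_rpow_mul_rpow {u v a α : ℝ} (hu : 0 ≤ u) (hv : 0 ≤ v)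
    (ha : 0 ≤ a) (hα : 0 < α) (h : u ≤ a * v ^ α * u ^ (1 - α)) : u ≤ a ^ α⁻¹ * v := by
  rcases hu.eq_or_lt with rfl | hu
  · positivity
  have hsplit : u ^ α * u ^ (1 - α) = u := by rw [← Real.rpow_add hu]; simp
  have hpow : u ^ α ≤ a * v ^ α :=
    le_of_mul_le_mul_right (hsplit.trans_le h) (Real.rpow_pos_of_pos hu _)
  calc u ≤ (a * v ^ α) ^ α⁻¹ := (Real.le_rpow_inv_iff_of_pos hu.le (by positivity) hα).2 hpow
    _ = a ^ α⁻¹ * v := by rw [Real.mul_rpow ha (by positivity), Real.rpow_rpow_inv hv hα.ne']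

def IsInterpolativeKannan {X : Type*} [PseudoMetricSpace X] (S : X → X) (a α : ℝ) : Prop :=
  ∀ x y, dist (S x) (S y) ≤ a * dist x (S x) ^ α * dist y (S y) ^ (1 - α)

namespace IsInterpolativeKannan

variable {X : Type*} [MetricSpace X] {S : X → X} {a α : ℝ}

theorem dist_map_map_le (hS : IsInterpolativeKannan S a α) (ha : 0 ≤ a) (hα : 0 < α) (x : X) :
    dist (S x) (S (S x)) ≤ a ^ α⁻¹ * dist x (S x) :=
  le_rpow_inv_mul_of_le_mul_rpow_mul_rpow dist_nonneg dist_nonneg ha hα (hS x (S x))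

theorem dist_iterate_succ_le (hS : IsInterpolativeKannan S a α) (ha : 0 ≤ a) (hα : 0 < α)
    (x : X) (n : ℕ) : dist (S^[n] x) (S^[n + 1] x) ≤ dist x (S x) * (a ^ α⁻¹) ^ n := by
  induction n with
  | zero => simp
  | succ n ih =>
    rw [Function.iterate_succ_apply'] at ih
    calc dist (S^[n + 1] x) (S^[n + 2] x) = dist (S (S^[n] x)) (S (S (S^[n] x))) := by
          simp only [Function.iterate_succ_apply']
      _ ≤ a ^ α⁻¹ * dist (S^[n] x) (S (S^[n] x)) := hS.dist_map_map_le ha hα _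
      _ ≤ a ^ α⁻¹ * (dist x (S x) * (a ^ α⁻¹) ^ n) := by gcongr
      _ = dist x (S x) * (a ^ α⁻¹) ^ (n + 1) := by ring

theorem cauchySeq_iterate (hS : IsInterpolativeKannan S a α) (ha₀ : 0 ≤ a) (ha₁ : a < 1)
    (hα : 0 < α) (x : X) : CauchySeq fun n => S^[n] x :=
  cauchySeq_of_le_geometric _ _ (Real.rpow_lt_one ha₀ ha₁ (inv_pos.2 hα))
    (hS.dist_iterate_succ_le ha₀ hα x)

theorem isFixedPt_of_tendsto_iterate (hS : IsInterpolativeKannan S a α) (hα : 0 < α) {x z : X}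
    (h : Tendsto (fun n => S^[n] x) atTop (𝓝 z)) : Function.IsFixedPt S z := by
  have h' : Tendsto (fun n => S (S^[n] x)) atTop (𝓝 z) := by
    simpa only [Function.comp_def, Function.iterate_succ_apply'] using
      h.comp (tendsto_add_atTop_nat 1)
  have hstep : Tendsto (fun n => dist (S^[n] x) (S (S^[n] x))) atTop (𝓝 0) := by
    simpa using h.dist h'
  have hbound : Tendsto (fun n => a * dist (S^[n] x) (S (S^[n] x)) ^ α * dist z (S z) ^ (1 - α))
      atTop (𝓝 0) := by
    simpa [Real.zero_rpow hα.ne'] using ((hstep.rpow_const (Or.inr hα.le)).const_mul a).mul_const _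
  have hS' : Tendsto (fun n => S (S^[n] x)) atTop (𝓝 (S z)) :=
    tendsto_iff_dist_tendsto_zero.2 (squeeze_zero (fun _ => dist_nonneg) (fun n => hS _ z) hbound)
  exact tendsto_nhds_unique hS' h'

theorem eq_of_isFixedPt (hS : IsInterpolativeKannan S a α) (hα : α ≠ 0) {y z : X}
    (hy : Function.IsFixedPt S y) (hz : Function.IsFixedPt S z) : y = z := by
  have h := hS y z
  rw [hy.eq, hz.eq, dist_self, Real.zero_rpow hα] at h
  exact dist_le_zero.1 (by simpa using h)

theorem exists_isFixedPt_tendsto [CompleteSpace X] [Nonempty X]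
    (hS : IsInterpolativeKannan S a α) (ha₀ : 0 ≤ a) (ha₁ : a < 1) (hα : 0 < α) :
    ∃ z, Function.IsFixedPt S z ∧ (∀ y, Function.IsFixedPt S y → y = z) ∧
      ∀ x, Tendsto (fun n => S^[n] x) atTop (𝓝 z) := by
  have limit_isFixedPt (x : X) : ∃ z, Function.IsFixedPt S z ∧
      Tendsto (fun n => S^[n] x) atTop (𝓝 z) :=
    let ⟨z, hz⟩ := cauchySeq_tendsto_of_complete (hS.cauchySeq_iterate ha₀ ha₁ hα x)
    ⟨z, hS.isFixedPt_of_tendsto_iterate hα hz, hz⟩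
  obtain ⟨z, hz, -⟩ := limit_isFixedPt (Classical.arbitrary X)
  refine ⟨z, hz, fun y hy => hS.eq_of_isFixedPt hα.ne' hy hz, fun x => ?_⟩
  obtain ⟨w, hw, hxw⟩ := limit_isFixedPt x
  rwa [hS.eq_of_isFixedPt hα.ne' hw hz] at hxw

end IsInterpolativeKannan

section Krasnoselskii

variable {E : Type*} [NormedAddCommGroup E] [NormedSpace ℝ E] {T : E → E}

def IsEnrichedInterpolativeKannan (T : E → E) (a b α : ℝ) : Prop :=
  ∀ x y, ‖b • (x - y) + (T x - T y)‖ ≤ a * ‖x - T x‖ ^ α * ‖y - T y‖ ^ (1 - α)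

def krasnoselskiiMap (T : E → E) (t : ℝ) (x : E) : E :=
  (1 - t) • x + t • T x

theorem sub_krasnoselskiiMap (T : E → E) (t : ℝ) (x : E) :
    x - krasnoselskiiMap T t x = t • (x - T x) := by
  unfold krasnoselskiiMap
  module

theorem isFixedPt_krasnoselskiiMap_iff {t : ℝ} (ht : t ≠ 0) {x : E} :
    Function.IsFixedPt (krasnoselskiiMap T t) x ↔ Function.IsFixedPt T x := by
  rw [Function.IsFixedPt, Function.IsFixedPt, eq_comm, ← sub_eq_zero, sub_krasnoselskiiMap,
    smul_eq_zero_iff_right ht, sub_eq_zero, eq_comm]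

theorem krasnoselskiiMap_sub_krasnoselskiiMap {b : ℝ} (hb : b + 1 ≠ 0) (x y : E) :
    krasnoselskiiMap T (1 / (b + 1)) x - krasnoselskiiMap T (1 / (b + 1)) y =
      (1 / (b + 1)) • (b • (x - y) + (T x - T y)) := by
  have hcoeff : 1 - 1 / (b + 1) = 1 / (b + 1) * b := by field_simp; ring
  unfold krasnoselskiiMap
  rw [hcoeff]
  module

theorem IsEnrichedInterpolativeKannan.isInterpolativeKannan_krasnoselskiiMap {a b α : ℝ}
    (hT : IsEnrichedInterpolativeKannan T a b α) (hb : 0 < b + 1) :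
    IsInterpolativeKannan (krasnoselskiiMap T (1 / (b + 1))) a α := by
  intro x y
  have ht : 0 < 1 / (b + 1) := by positivity
  have hdist (z : E) : dist z (krasnoselskiiMap T (1 / (b + 1)) z) = 1 / (b + 1) * ‖z - T z‖ := by
    rw [dist_eq_norm, sub_krasnoselskiiMap, norm_smul, Real.norm_of_nonneg ht.le]
  have hsplit : (1 / (b + 1)) ^ α * (1 / (b + 1)) ^ (1 - α) = 1 / (b + 1) := by
    rw [← Real.rpow_add ht]; simp
  rw [dist_eq_norm, krasnoselskiiMap_sub_krasnoselskiiMap hb.ne', norm_smul,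
    Real.norm_of_nonneg ht.le, hdist, hdist, Real.mul_rpow ht.le (norm_nonneg _),
    Real.mul_rpow ht.le (norm_nonneg _)]
  calc 1 / (b + 1) * ‖b • (x - y) + (T x - T y)‖
      ≤ 1 / (b + 1) * (a * ‖x - T x‖ ^ α * ‖y - T y‖ ^ (1 - α)) := by gcongr; exact hT x y
    _ = _ := by nth_rewrite 1 [← hsplit]; ring

end Krasnoselskii

theorem krasnoselskii_converges_to_fixed_point_general
    {E : Type*} [NormedAddCommGroup E] [NormedSpace ℝ E] [CompleteSpace E]
    (T : E → E) (a b α : ℝ) (hb : 0 < b) (ha0 : 0 ≤ a) (ha1 : a < 1)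
    (hα0 : 0 < α)
    (hT : ∀ x y : E, ‖b • (x - y) + (T x - T y)‖ ≤
      a * ‖x - T x‖ ^ α * ‖y - T y‖ ^ (1 - α)) :
    ∃ xs : E, (T xs = xs ∧ ∀ y : E, T y = y → y = xs) ∧
      ∀ x₀ : E,
        Tendsto (fun n => (fun x => (1 - (1 / (b + 1))) • x + (1 / (b + 1)) • T x)^[n] x₀)
          atTop (𝓝 xs) := by
  have hb1 : 0 < b + 1 := by linarith
  have hS : IsInterpolativeKannan (krasnoselskiiMap T (1 / (b + 1))) a α :=
    IsEnrichedInterpolativeKannan.isInterpolativeKannan_krasnoselskiiMap hT hb1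
  obtain ⟨z, hz, huniq, hconv⟩ := hS.exists_isFixedPt_tendsto ha0 ha1 hα0
  have ht : 1 / (b + 1) ≠ 0 := (one_div_pos.2 hb1).ne'
  refine ⟨z, ⟨(isFixedPt_krasnoselskiiMap_iff ht).1 hz, fun y hy => ?_⟩, hconv⟩
  exact huniq y ((isFixedPt_krasnoselskiiMap_iff ht).2 hy)

theorem krasnoselskii_converges_to_fixed_point
    {E : Type*} [NormedAddCommGroup E] [NormedSpace ℝ E] [CompleteSpace E]
    (T : E → E) (a b α : ℝ) (hb : 0 < b) (ha0 : 0 ≤ a) (ha1 : a < 1)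
    (hα0 : 0 < α) (hα1 : α < 1)
    (hT : ∀ x y : E, ‖b • (x - y) + (T x - T y)‖ ≤
      a * ‖x - T x‖ ^ α * ‖y - T y‖ ^ (1 - α)) :
    ∃ xs : E, (T xs = xs ∧ ∀ y : E, T y = y → y = xs) ∧
      ∀ x₀ : E,
        Tendsto (fun n => (fun x => (1 - (1 / (b + 1))) • x + (1 / (b + 1)) • T x)^[n] x₀)
          atTop (𝓝 xs) :=
  krasnoselskii_converges_to_fixed_point_general T a b α hb ha0 ha1 hα0 hT
end

section
/- Let Y be a finite measure space with μ(Y) > 0 and X = L²(Y). The operator T : X → X defined by Tf = g − 3f (where g is the constant function 1) is not an interpolative Kannan type contraction: there is no a ∈ [0,1) and α ∈ (0,1) such that ‖Tf − Th‖ ≤ a·‖f − Tf‖^α·‖h − Th‖^(1−α) for all f, h ∈ X. -/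
/-!
At a fixed point `p` of `T` the factor `‖p - T p‖ ^ (1 - α)` vanishes, so an interpolative Kannan
map sends every point to `p`. But `f ↦ g - 3 f` has the fixed point `g / 4` and is not constant,
since `g ≠ 0` in `L²(μ)`.
-/

open MeasureTheory Function

def InterpolativeKannanWith {X : Type*} [MetricSpace X] (a α : ℝ) (T : X → X) : Prop :=
  ∀ x y, dist (T x) (T y) ≤ a * dist x (T x) ^ α * dist y (T y) ^ (1 - α)

theorem InterpolativeKannanWith.apply_eq_of_isFixedPt {X : Type*} [MetricSpace X] {a α : ℝ}
    {T : X → X} (hT : InterpolativeKannanWith a α T) (hα : α < 1) {p : X} (hp : IsFixedPt T p)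
    (x : X) : T x = p := by
  have h := hT x p
  rw [hp.eq, dist_self, Real.zero_rpow (by linarith), mul_zero] at h
  exact dist_le_zero.mp h

theorem isFixedPt_sub_smul {K E : Type*} [Field K] [AddCommGroup E] [Module K E] (g : E) {c : K}
    (hc : 1 + c ≠ 0) : IsFixedPt (fun x => g - c • x) ((1 + c)⁻¹ • g) := by
  change g - c • (1 + c)⁻¹ • g = (1 + c)⁻¹ • g
  have h_coeff : (1 + c)⁻¹ + c * (1 + c)⁻¹ = 1 := by field_simp
  rw [smul_smul, sub_eq_iff_eq_add, ← add_smul, h_coeff, one_smul]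

theorem not_interpolativeKannanWith_sub_smul {K E : Type*} [Field K] [NormedAddCommGroup E]
    [Module K E] {g : E} (hg : g ≠ 0) {c : K} (hc₀ : c ≠ 0) (hc : 1 + c ≠ 0) {a α : ℝ}
    (hα : α < 1) : ¬ InterpolativeKannanWith a α (fun x => g - c • x) := by
  intro hT
  have hp := isFixedPt_sub_smul g hc
  have h_eq : g - c • (0 : E) = g - c • g :=
    (hT.apply_eq_of_isFixedPt hα hp 0).trans (hT.apply_eq_of_isFixedPt hα hp g).symm
  rw [smul_zero, sub_zero, eq_comm, sub_eq_self, smul_eq_zero] at h_eq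
  exact h_eq.elim hc₀ hg

theorem MeasureTheory.Lp.const_ne_zero {α E : Type*} [MeasurableSpace α] [NormedAddCommGroup E]
    {p : ENNReal} (hp : p ≠ 0) (μ : Measure α) [IsFiniteMeasure μ] [NeZero μ] {c : E}
    (hc : c ≠ 0) : Lp.const p μ c ≠ 0 := by
  have := measureReal_univ_pos (μ := μ)
  have h_norm : 0 < ‖Lp.const p μ c‖ := by
    rw [Lp.norm_const p μ c hp]
    positivity
  exact ne_of_apply_ne norm (by rw [Lp.norm_zero]; exact h_norm.ne')

theorem L2_example_not_interpolative_kannan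
    {Y : Type*} [MeasurableSpace Y] (μ : MeasureTheory.Measure Y) [IsFiniteMeasure μ]
    (hμ : μ Set.univ ≠ 0) :
    ¬ ∃ (a α : ℝ), 0 ≤ a ∧ a < 1 ∧ 0 < α ∧ α < 1 ∧
      ∀ f h : Lp ℝ 2 μ,
        ‖(((memLp_const (1 : ℝ)).toLp (fun _ => (1 : ℝ)) - (3 : ℝ) • f) -
            ((memLp_const (1 : ℝ)).toLp (fun _ => (1 : ℝ)) - (3 : ℝ) • h))‖ ≤
          a * ‖f - ((memLp_const (1 : ℝ)).toLp (fun _ => (1 : ℝ)) - (3 : ℝ) • f)‖ ^ α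
            * ‖h - ((memLp_const (1 : ℝ)).toLp (fun _ => (1 : ℝ)) - (3 : ℝ) • h)‖ ^ (1 - α) := by
  rintro ⟨a, α, -, -, -, hα, H⟩
  have : NeZero μ := ⟨Measure.measure_univ_ne_zero.mp hμ⟩
  have hg : Lp.const 2 μ (1 : ℝ) ≠ 0 := Lp.const_ne_zero two_ne_zero μ one_ne_zero
  refine not_interpolativeKannanWith_sub_smul (a := a) hg (three_ne_zero (α := ℝ)) (by norm_num)
    hα fun f h => ?_
  simpa only [dist_eq_norm, MemLp.toLp_const] using H f h
end

section
/- Let T : X → X satisfy ‖Tx − Ty‖ ≤ a · ‖x − Tx‖^α · ‖y − Ty‖^(1−α) for all x, y ∈ X, where a ∈ [0,1), α ∈ (0,1). Then for every n ≥ 1, any fixed point of Tⁿ is a fixed point of T. -/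
theorem interpolative_kannan_periodic_point
    {E : Type*} [NormedAddCommGroup E] [NormedSpace ℝ E]
    (T : E → E) (a α : ℝ) (ha0 : 0 ≤ a) (ha1 : a < 1)
    (hα0 : 0 < α) (hα1 : α < 1)
    (hT : ∀ x y : E, ‖T x - T y‖ ≤ a * ‖x - T x‖ ^ α * ‖y - T y‖ ^ (1 - α)) :
    ∀ n : ℕ, 1 ≤ n → ∀ y : E, T^[n] y = y → T y = y := by
  set c : ℝ := a ^ (1 / α) with hc
  have hinv : 0 < 1 / α := by positivity
  have hc0 : 0 ≤ c := Real.rpow_nonneg ha0 _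
  have hc1 : c < 1 := by
    rcases eq_or_lt_of_le ha0 with h | h
    · rw [hc, ← h, Real.zero_rpow (ne_of_gt hinv)]; norm_num
    · exact Real.rpow_lt_one (le_of_lt h) ha1 hinv
  -- key step: ‖T x - T (T x)‖ ≤ c * ‖x - T x‖
  have key : ∀ x : E, ‖T x - T (T x)‖ ≤ c * ‖x - T x‖ := by
    intro x
    set d1 := ‖x - T x‖ with hd1
    set d2 := ‖T x - T (T x)‖ with hd2
    have h1 : (0:ℝ) ≤ d1 := norm_nonneg _
    have h2 : (0:ℝ) ≤ d2 := norm_nonneg _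
    rcases eq_or_lt_of_le h2 with h2e | h2p
    · rw [← h2e]; positivity
    have hineq := hT x (T x)
    rw [← hd1, ← hd2] at hineq
    -- d2 = d2^α * d2^(1-α)
    have hsplit : d2 = d2 ^ α * d2 ^ (1 - α) := by
      rw [← Real.rpow_add h2p]; simp
    have hpow : d2 ^ α ≤ a * d1 ^ α := by
      have hpos : (0:ℝ) < d2 ^ (1 - α) := Real.rpow_pos_of_pos h2p _
      calc d2 ^ α = d2 / d2 ^ (1-α) := by
            rw [eq_div_iff (ne_of_gt hpos), ← Real.rpow_add h2p]; simp
        _ ≤ a * d1 ^ α * d2 ^ (1-α) / d2 ^ (1-α) := by gcongr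
        _ = a * d1 ^ α := by field_simp
    have hfinal : d2 ≤ c * d1 := by
      have h3 : (d2 ^ α) ^ (1/α) ≤ (a * d1 ^ α) ^ (1/α) :=
        Real.rpow_le_rpow (by positivity) hpow (le_of_lt hinv)
      have hl : (d2 ^ α) ^ (1/α) = d2 := by
        rw [← Real.rpow_mul h2, mul_one_div_cancel (ne_of_gt hα0), Real.rpow_one]
      have hr : (a * d1 ^ α) ^ (1/α) = c * d1 := by
        rw [Real.mul_rpow ha0 (by positivity), ← Real.rpow_mul h1,
          mul_one_div_cancel (ne_of_gt hα0), Real.rpow_one]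
      rwa [hl, hr] at h3
    exact hfinal
  intro n hn y hy
  -- iterate estimate
  have iter : ∀ k : ℕ, ‖T^[k] y - T^[k+1] y‖ ≤ c ^ k * ‖y - T y‖ := by
    intro k
    induction k with
    | zero => simp
    | succ k ih =>
      have : ‖T^[k+1] y - T^[k+2] y‖ ≤ c * ‖T^[k] y - T^[k+1] y‖ := by
        have := key (T^[k] y)
        simpa [Function.iterate_succ_apply'] using this
      calc ‖T^[k+1] y - T^[k+2] y‖ ≤ c * ‖T^[k] y - T^[k+1] y‖ := this
        _ ≤ c * (c ^ k * ‖y - T y‖) := by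
            exact mul_le_mul_of_nonneg_left ih hc0
        _ = c ^ (k+1) * ‖y - T y‖ := by ring
  have hdn : ‖T^[n] y - T^[n+1] y‖ = ‖y - T y‖ := by
    rw [Function.iterate_succ_apply', hy]
  have hle : ‖y - T y‖ ≤ c ^ n * ‖y - T y‖ := by
    calc ‖y - T y‖ = ‖T^[n] y - T^[n+1] y‖ := hdn.symm
      _ ≤ c ^ n * ‖y - T y‖ := iter n
  have hcn : c ^ n < 1 := pow_lt_one₀ hc0 hc1 (by omega)
  have hzero : ‖y - T y‖ = 0 := by
    by_contra h
    have hp : 0 < ‖y - T y‖ := lt_of_le_of_ne (norm_nonneg _) (Ne.symm h)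
    nlinarith
  have := norm_eq_zero.mp hzero
  have := sub_eq_zero.mp this
  exact this.symm
end

section
/- Let T : X → X satisfy ‖Tx − Ty‖ ≤ a · ‖x − Tx‖^α · ‖y − Ty‖^(1−α) for all x, y ∈ X (a ∈ [0,1), α ∈ (0,1)), with fixed point x*. Then for any ε > 0 and any w* ∈ X with ‖w* − T w*‖ ≤ ε, we have ‖x* − w*‖ ≤ ε. In particular the fixed point equation is Ulam-Hyers stable. -/
theorem interpolative_kannan_ulam_hyers
    {E : Type*} [NormedAddCommGroup E] [NormedSpace ℝ E]
    (T : E → E) (a α : ℝ) (ha0 : 0 ≤ a) (ha1 : a < 1)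
    (hα0 : 0 < α) (hα1 : α < 1)
    (hT : ∀ x y : E, ‖T x - T y‖ ≤ a * ‖x - T x‖ ^ α * ‖y - T y‖ ^ (1 - α))
    (xs : E) (hxs : T xs = xs) :
    ∀ ε : ℝ, 0 < ε → ∀ w : E, ‖w - T w‖ ≤ ε → ‖xs - w‖ ≤ ε := by
  intro ε hε w hw
  have h := hT xs w
  rw [hxs, sub_self, norm_zero, Real.zero_rpow (ne_of_gt hα0), mul_zero, zero_mul] at h
  calc ‖xs - w‖ ≤ ‖xs - T w‖ + ‖T w - w‖ := norm_sub_le_norm_sub_add_norm_sub _ _ _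
    _ ≤ 0 + ε := by
        apply add_le_add
        · exact h
        · rw [← norm_neg]; simpa using hw
    _ = ε := by ring
end

section
/- Let X be a Banach space and T : X → X a (b,a)-enriched Kannan contraction: ‖b(x−y) + Tx − Ty‖ ≤ a(‖x−Tx‖ + ‖y−Ty‖) for all x, y ∈ X, with b ∈ [0,∞) and a ∈ [0,1/2). Then T has a unique fixed point. -/
private lemma kannan_fixed_point
    {E : Type*} [NormedAddCommGroup E] [CompleteSpace E]
    (S : E → E) (a : ℝ) (ha0 : 0 ≤ a) (ha1 : a < 1 / 2)
    (hS : ∀ x y : E, ‖S x - S y‖ ≤ a * (‖x - S x‖ + ‖y - S y‖)) :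
    ∃! x : E, S x = x := by
  set r : ℝ := a / (1 - a) with hr
  have h1a : (0:ℝ) < 1 - a := by linarith
  have hr0 : 0 ≤ r := div_nonneg ha0 h1a.le
  have hr1 : r < 1 := by
    rw [hr, div_lt_one h1a]; linarith
  set u : ℕ → E := fun n => S^[n] 0 with hu
  have hsucc : ∀ n, u (n+1) = S (u n) := by
    intro n; simp [hu, Function.iterate_succ_apply']
  set d : ℕ → ℝ := fun n => ‖u n - u (n+1)‖ with hd
  have hstep : ∀ n, d (n+1) ≤ r * d n := by
    intro n
    have h := hS (u n) (u (n+1))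
    rw [← hsucc n, ← hsucc (n+1)] at h
    have : (1 - a) * d (n+1) ≤ a * d n := by
      have e : ‖u (n+1) - u (n+2)‖ = d (n+1) := rfl
      simp only [hd] at h ⊢
      nlinarith [h]
    rw [hr, div_mul_eq_mul_div, le_div_iff₀ h1a]
    nlinarith [this]
  have hgeo : ∀ n, d n ≤ d 0 * r ^ n := by
    intro n
    induction n with
    | zero => simp
    | succ n ih =>
      calc d (n+1) ≤ r * d n := hstep n
        _ ≤ r * (d 0 * r ^ n) := by
            exact mul_le_mul_of_nonneg_left ih hr0
        _ = d 0 * r ^ (n+1) := by ring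
  have hcauchy : CauchySeq u := by
    apply cauchySeq_of_le_geometric r (d 0) hr1
    intro n
    rw [dist_eq_norm]
    exact hgeo n
  obtain ⟨x, hx⟩ := cauchySeq_tendsto_of_complete hcauchy
  have hd0 : Filter.Tendsto d Filter.atTop (nhds 0) := by
    have : Filter.Tendsto (fun n => d 0 * r ^ n) Filter.atTop (nhds 0) := by
      simpa using (tendsto_pow_atTop_nhds_zero_of_lt_one hr0 hr1).const_mul (d 0)
    refine squeeze_zero (fun n => norm_nonneg _) hgeo this
  have hfix : S x = x := by
    have key : ‖S x - x‖ ≤ a * (‖x - S x‖ + 0) := by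
      have h1 : Filter.Tendsto (fun n => ‖S x - u (n+1)‖) Filter.atTop (nhds ‖S x - x‖) := by
        have : Filter.Tendsto (fun n => u (n+1)) Filter.atTop (nhds x) :=
          hx.comp (Filter.tendsto_add_atTop_nat 1)
        exact (Filter.Tendsto.const_sub _ this).norm
      have h2 : Filter.Tendsto (fun n => a * (‖x - S x‖ + d n)) Filter.atTop
          (nhds (a * (‖x - S x‖ + 0))) :=
        (Filter.Tendsto.const_add _ hd0).const_mul a
      refine le_of_tendsto_of_tendsto' h1 h2 ?_
      intro n
      show ‖S x - u (n+1)‖ ≤ a * (‖x - S x‖ + ‖u n - u (n+1)‖)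
      rw [hsucc n]
      exact hS x (u n)
    have : ‖S x - x‖ ≤ a * ‖S x - x‖ := by
      rw [norm_sub_rev (S x) x] at key ⊢
      simpa using key
    have h0 : ‖S x - x‖ = 0 := by nlinarith [norm_nonneg (S x - x)]
    rwa [norm_sub_eq_zero_iff] at h0
  refine ⟨x, hfix, ?_⟩
  intro y hy
  have := hS y x
  rw [hy, hfix] at this
  simp at this
  exact sub_eq_zero.mp this

theorem enriched_kannan_fixed_point
    {E : Type*} [NormedAddCommGroup E] [NormedSpace ℝ E] [CompleteSpace E]
    (T : E → E) (a b : ℝ) (hb : 0 ≤ b) (ha0 : 0 ≤ a) (ha1 : a < 1 / 2)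
    (hT : ∀ x y : E, ‖b • (x - y) + (T x - T y)‖ ≤
      a * (‖x - T x‖ + ‖y - T y‖)) :
    ∃! xs : E, T xs = xs := by
  have hb1 : (0:ℝ) < b + 1 := by linarith
  set S : E → E := fun x => (b + 1)⁻¹ • (b • x + T x) with hSdef
  have hxS : ∀ x : E, x - S x = (b + 1)⁻¹ • (x - T x) := by
    intro x
    have key : (b+1) • x - (b • x + T x) = x - T x := by
      rw [add_smul, one_smul]; abel
    calc x - S x = (b+1)⁻¹ • ((b+1) • x) - (b+1)⁻¹ • (b • x + T x) := by
          rw [smul_smul, inv_mul_cancel₀ hb1.ne', one_smul]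
      _ = (b+1)⁻¹ • ((b+1) • x - (b • x + T x)) := (smul_sub _ _ _).symm
      _ = (b+1)⁻¹ • (x - T x) := by rw [key]
  have hnormxS : ∀ x : E, ‖x - S x‖ = (b + 1)⁻¹ * ‖x - T x‖ := by
    intro x
    rw [hxS, norm_smul, norm_inv, Real.norm_eq_abs, abs_of_pos hb1]
  have hSkan : ∀ x y : E, ‖S x - S y‖ ≤ a * (‖x - S x‖ + ‖y - S y‖) := by
    intro x y
    have e : S x - S y = (b + 1)⁻¹ • (b • (x - y) + (T x - T y)) := by
      rw [hSdef]
      simp only [← smul_sub]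
      congr 1
      rw [smul_sub]
      abel
    rw [e, norm_smul, norm_inv, Real.norm_eq_abs, abs_of_pos hb1,
      hnormxS, hnormxS]
    have h := hT x y
    have hinv : (0:ℝ) ≤ (b+1)⁻¹ := by positivity
    calc (b+1)⁻¹ * ‖b • (x - y) + (T x - T y)‖
        ≤ (b+1)⁻¹ * (a * (‖x - T x‖ + ‖y - T y‖)) :=
          mul_le_mul_of_nonneg_left h hinv
      _ = a * ((b+1)⁻¹ * ‖x - T x‖ + (b+1)⁻¹ * ‖y - T y‖) := by ring
  have hfixiff : ∀ x : E, S x = x ↔ T x = x := by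
    intro x
    constructor
    · intro h
      have := hxS x
      rw [h, sub_self] at this
      have h2 : x - T x = 0 := by
        have := this.symm
        rwa [smul_eq_zero, or_iff_right (by positivity : ((b:ℝ)+1)⁻¹ ≠ 0)] at this
      have := sub_eq_zero.mp h2
      exact this.symm
    · intro h
      have := hxS x
      rw [show x - T x = 0 from by rw [h, sub_self], smul_zero, sub_eq_zero] at this
      exact this.symm
  obtain ⟨x, hx, huniq⟩ := kannan_fixed_point S a ha0 ha1 hSkan
  exact ⟨x, (hfixiff x).mp hx, fun y hy => huniq y ((hfixiff y).mpr hy)⟩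
end

section
/- Let T : X → X be a (b,a)-enriched Kannan contraction with b > 0 and λ = 1/(b+1). Then T_λ = (1−λ)I + λT is a Kannan contraction: ‖T_λ x − T_λ y‖ ≤ a(‖x − T_λ x‖ + ‖y − T_λ y‖) for all x, y ∈ X. -/
def averagedMap {R M : Type*} [Ring R] [AddCommGroup M] [Module R M] (T : M → M) (l : R) :
    M → M :=
  fun x => (1 - l) • x + l • T x

section Algebra

variable {R M : Type*} [CommRing R] [AddCommGroup M] [Module R M] (T : M → M)

lemma self_sub_averagedMap (l : R) (x : M) : x - averagedMap T l x = l • (x - T x) := by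
  unfold averagedMap
  module

lemma averagedMap_sub_averagedMap {l b : R} (hl : l * (b + 1) = 1) (x y : M) :
    averagedMap T l x - averagedMap T l y = l • (b • (x - y) + (T x - T y)) := by
  have hcoeff : 1 - l = l * b := by linear_combination -hl
  unfold averagedMap
  rw [hcoeff]
  module

end Algebra

/-- Multiplying the enriched Kannan inequality by `λ` turns it into the Kannan inequality for
`T_λ`, because both sides pick up exactly one factor `λ`. -/
theorem norm_averagedMap_sub_le {E : Type*} [NormedAddCommGroup E] [NormedSpace ℝ E]
    (T : E → E) {a b l : ℝ} (hl0 : 0 ≤ l) (hl : l * (b + 1) = 1)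
    (hT : ∀ x y : E, ‖b • (x - y) + (T x - T y)‖ ≤ a * (‖x - T x‖ + ‖y - T y‖)) (x y : E) :
    ‖averagedMap T l x - averagedMap T l y‖ ≤
      a * (‖x - averagedMap T l x‖ + ‖y - averagedMap T l y‖) := by
  rw [averagedMap_sub_averagedMap T hl, self_sub_averagedMap, self_sub_averagedMap,
    norm_smul, norm_smul, norm_smul, Real.norm_of_nonneg hl0]
  calc l * ‖b • (x - y) + (T x - T y)‖ ≤ l * (a * (‖x - T x‖ + ‖y - T y‖)) :=
        mul_le_mul_of_nonneg_left (hT x y) hl0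
    _ = a * (l * ‖x - T x‖ + l * ‖y - T y‖) := by ring

theorem enriched_kannan_averaged_is_kannan_general
    {E : Type*} [NormedAddCommGroup E] [NormedSpace ℝ E]
    (T : E → E) (a b : ℝ) (hb : 0 < b)
    (hT : ∀ x y : E, ‖b • (x - y) + (T x - T y)‖ ≤
      a * (‖x - T x‖ + ‖y - T y‖)) :
    ∀ x y : E,
      ‖((1 - (1 / (b + 1))) • x + (1 / (b + 1)) • T x) -
        ((1 - (1 / (b + 1))) • y + (1 / (b + 1)) • T y)‖ ≤
      a * (‖x - ((1 - (1 / (b + 1))) • x + (1 / (b + 1)) • T x)‖ +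
        ‖y - ((1 - (1 / (b + 1))) • y + (1 / (b + 1)) • T y)‖) := by
  have hb1 : b + 1 ≠ 0 := by positivity
  exact norm_averagedMap_sub_le T (by positivity) (by field_simp) hT

theorem enriched_kannan_averaged_is_kannan
    {E : Type*} [NormedAddCommGroup E] [NormedSpace ℝ E]
    (T : E → E) (a b : ℝ) (hb : 0 < b) (ha0 : 0 ≤ a) (ha1 : a < 1 / 2)
    (hT : ∀ x y : E, ‖b • (x - y) + (T x - T y)‖ ≤
      a * (‖x - T x‖ + ‖y - T y‖)) :
    ∀ x y : E,
      ‖((1 - (1 / (b + 1))) • x + (1 / (b + 1)) • T x) -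
        ((1 - (1 / (b + 1))) • y + (1 / (b + 1)) • T y)‖ ≤
      a * (‖x - ((1 - (1 / (b + 1))) • x + (1 / (b + 1)) • T x)‖ +
        ‖y - ((1 - (1 / (b + 1))) • y + (1 / (b + 1)) • T y)‖) :=
  enriched_kannan_averaged_is_kannan_general T a b hb hT
end

section
/- Let T : X → X satisfy ‖Tx − Ty‖ ≤ a · ‖x − Tx‖^α · ‖y − Ty‖^(1−α) for all x, y ∈ X with a ∈ [0,1), α ∈ (0,1). Then T is asymptotically regular: for every x ∈ X, ‖T^{n+1}x − Tⁿx‖ → 0 as n → ∞. -/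
open Filter Topology

lemma ikar_key {a α b c : ℝ} (ha0 : 0 ≤ a) (ha1 : a < 1) (hα0 : 0 < α) (hα1 : α < 1)
    (hb : 0 ≤ b) (hc : 0 ≤ c) (h : c ≤ a * b ^ α * c ^ (1 - α)) : c ≤ a * b := by
  rcases eq_or_lt_of_le hc with hc0 | hc0
  · exact (hc0 ▸ mul_nonneg ha0 hb)
  have hcb : c ≤ b := by
    by_contra hcb
    push_neg at hcb
    have h1 : b ^ α < c ^ α := Real.rpow_lt_rpow hb hcb hα0
    have h2 : a * b ^ α * c ^ (1 - α) < a * c ^ α * c ^ (1 - α) := by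
      have hcp : (0:ℝ) < c ^ (1 - α) := Real.rpow_pos_of_pos hc0 _
      have ha0' : 0 < a := by
        rcases eq_or_lt_of_le ha0 with h' | h'
        · exfalso; rw [← h'] at h; simp at h; linarith
        · exact h'
      exact mul_lt_mul_of_pos_right (mul_lt_mul_of_pos_left h1 ha0') hcp
    have h3 : a * c ^ α * c ^ (1 - α) = a * c := by
      rw [mul_assoc, ← Real.rpow_add hc0]
      norm_num
    have : c < a * c := by linarith
    nlinarith
  have h4 : c ^ (1 - α) ≤ b ^ (1 - α) := Real.rpow_le_rpow hc hcb (by linarith)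
  have h5 : a * b ^ α * c ^ (1 - α) ≤ a * b ^ α * b ^ (1 - α) :=
    mul_le_mul_of_nonneg_left h4 (mul_nonneg ha0 (Real.rpow_nonneg hb _))
  have h6 : a * b ^ α * b ^ (1 - α) = a * b := by
    rcases eq_or_lt_of_le hb with hb0 | hb0
    · rw [← hb0]; rw [Real.zero_rpow (ne_of_gt hα0)]; ring
    · rw [mul_assoc, ← Real.rpow_add hb0]; norm_num
  linarith

theorem interpolative_kannan_asymptotically_regular
    {E : Type*} [NormedAddCommGroup E] [NormedSpace ℝ E]
    (T : E → E) (a α : ℝ) (ha0 : 0 ≤ a) (ha1 : a < 1)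
    (hα0 : 0 < α) (hα1 : α < 1)
    (hT : ∀ x y : E, ‖T x - T y‖ ≤ a * ‖x - T x‖ ^ α * ‖y - T y‖ ^ (1 - α)) :
    ∀ x : E, Tendsto (fun n => ‖T^[n + 1] x - T^[n] x‖) atTop (𝓝 0) := by
  intro x
  set d : ℕ → ℝ := fun n => ‖T^[n + 1] x - T^[n] x‖ with hd
  have hstep : ∀ n, d (n + 1) ≤ a * d n := by
    intro n
    have h := hT (T^[n] x) (T^[n + 1] x)
    have e1 : T (T^[n] x) = T^[n + 1] x := (Function.iterate_succ_apply' T n x).symm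
    have e2 : T (T^[n + 1] x) = T^[n + 2] x := (Function.iterate_succ_apply' T (n+1) x).symm
    rw [e1, e2] at h
    have h' : d (n + 1) ≤ a * d n ^ α * d (n + 1) ^ (1 - α) := by
      simpa [hd, norm_sub_rev] using h
    exact ikar_key ha0 ha1 hα0 hα1 (norm_nonneg _) (norm_nonneg _) h'
  have hbound : ∀ n, d n ≤ a ^ n * d 0 := by
    intro n
    induction n with
    | zero => simp
    | succ n ih =>
        calc d (n + 1) ≤ a * d n := hstep n
          _ ≤ a * (a ^ n * d 0) := mul_le_mul_of_nonneg_left ih ha0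
          _ = a ^ (n + 1) * d 0 := by ring
  have hge : ∀ n, 0 ≤ d n := fun n => norm_nonneg _
  have hlim : Tendsto (fun n => a ^ n * d 0) atTop (𝓝 0) := by
    have := (tendsto_pow_atTop_nhds_zero_of_lt_one ha0 ha1).mul_const (d 0)
    simpa using this
  exact squeeze_zero hge hbound hlim
end
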